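/- arXiv:1502.02978 — 3 statements merged into one kernel-verified Lean document; each statement's English description precedes it below -/
import Mathlib

section
/- Let G and H be finite groups such that the center of G is trivial and N(G) = N(H). Then every prime divisor of |G| is a prime divisor of |H|, i.e. π(G) ⊆ π(H). -/
/-- The set of conjugacy class sizes of a group `G`. -/
def classSizes (G : Type*) [Group G] : Set ℕ :=
  {n | ∃ g : G, n = Nat.card {h : G | IsConj g h}}

/-!
If a prime `p` divides no conjugacy class size of a finite group `G`, then every centralizer
`C_G(g)` has index prime to `p`, so a Sylow `p`-subgroup `P` fixes a coset of it; that is,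
every element of `G` is conjugate into `C_G(P)`. A finite group is not the union of the
conjugates of a proper subgroup (by Burnside's lemma, a transitive action on at least two points
has a fixed-point-free element), hence `C_G(P) = G` and `P` is central. So when `Z(G) = 1`,
every prime divisor of `|G|` divides a class size of `G`, which is a class size of `H` and
therefore divides `|H|`.
-/

open MulAction Subgroup

theorem MulAction.subsingleton_of_forall_fixedBy_nonempty {G X : Type*} [Group G] [Finite G]
    [MulAction G X] [Finite X] [IsPretransitive G X] (h : ∀ g : G, (fixedBy X g).Nonempty) :
    Subsingleton X := by
  classical
  cases nonempty_fintype G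
  cases nonempty_fintype X
  rcases isEmpty_or_nonempty X with hX | hX
  · infer_instance
  obtain ⟨hunique⟩ := (pretransitive_iff_unique_quotient_of_nonempty G X).1 inferInstance
  have hburnside : ∑ _g : G, 1 = ∑ g : G, Fintype.card (fixedBy X g) := by
    rw [sum_card_fixedBy_eq_card_orbits_mul_card_group G X, Fintype.card_unique, one_mul,
      Finset.sum_const, Finset.card_univ, smul_eq_mul, mul_one]
  have hfix_one := (Finset.sum_eq_sum_iff_of_le fun g _ ↦
    Fintype.card_pos_iff.2 (h g).to_subtype).1 hburnside 1 (Finset.mem_univ _)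
  rw [Fintype.card_congr (Equiv.subtypeUnivEquiv (by simp))] at hfix_one
  exact Fintype.card_le_one_iff_subsingleton.1 hfix_one.ge

section ConjugacyClasses

variable {G : Type*} [Group G]

theorem Subgroup.eq_top_of_forall_exists_conj_mem [Finite G] (K : Subgroup G)
    (h : ∀ g : G, ∃ x : G, x⁻¹ * g * x ∈ K) : K = ⊤ := by
  rw [← QuotientGroup.subsingleton_iff]
  refine subsingleton_of_forall_fixedBy_nonempty (G := G) fun g ↦ ?_
  obtain ⟨x, hx⟩ := h g
  exact ⟨(x : G ⧸ K), QuotientGroup.eq.2 (by simpa [mul_assoc] using K.inv_mem hx)⟩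

theorem card_isConj_eq_index_centralizer (g : G) :
    Nat.card {h : G | IsConj g h} = (centralizer {g}).index := by
  have hclass : {h : G | IsConj g h} = orbit (ConjAct G) g :=
    Set.ext fun _ ↦ ConjAct.mem_orbit_conjAct.trans isConj_comm |>.symm
  have hstab : (centralizer {g}).index = (stabilizer (ConjAct G) g).index := by
    rw [ConjAct.stabilizer_eq_centralizer]
    -- `ConjAct G` is a type synonym for `G`, so the two centralizers agree definitionally.
    rfl
  rw [hstab, index_stabilizer, hclass, Nat.card_coe_set_eq]

variable {p : ℕ} [Fact p.Prime] {P : Subgroup G}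

theorem IsPGroup.exists_conj_mem_of_not_dvd_index (hP : IsPGroup p P) {K : Subgroup G}
    (hK : ¬p ∣ K.index) : ∃ x : G, ∀ y ∈ P, x⁻¹ * y * x ∈ K := by
  obtain ⟨xK, hxK⟩ := hP.nonempty_fixed_point_of_prime_not_dvd_card (G ⧸ K) hK
  induction xK using QuotientGroup.induction_on with | H x => ?_
  refine ⟨x, fun y hy ↦ ?_⟩
  simpa [mul_assoc] using QuotientGroup.eq.1 (hxK ⟨y⁻¹, P.inv_mem hy⟩)

theorem exists_conj_mem_centralizer_of_not_dvd_card_isConj (hP : IsPGroup p P) {g : G}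
    (hg : ¬p ∣ Nat.card {h : G | IsConj g h}) : ∃ x : G, x⁻¹ * g * x ∈ centralizer P := by
  rw [card_isConj_eq_index_centralizer] at hg
  obtain ⟨x, hx⟩ := hP.exists_conj_mem_of_not_dvd_index hg
  refine ⟨x⁻¹, fun y hy ↦ ?_⟩
  have hcomm := mem_centralizer_singleton_iff.1 (hx y hy)
  calc y * (x⁻¹⁻¹ * g * x⁻¹) = x * (x⁻¹ * y * x * g) * x⁻¹ := by group
    _ = x * (g * (x⁻¹ * y * x)) * x⁻¹ := by rw [hcomm]
    _ = x⁻¹⁻¹ * g * x⁻¹ * y := by group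

theorem le_center_of_forall_not_dvd_card_isConj [Finite G] (hP : IsPGroup p P)
    (h : ∀ g : G, ¬p ∣ Nat.card {h : G | IsConj g h}) : P ≤ center G :=
  centralizer_eq_top_iff_subset.1 <| (centralizer P).eq_top_of_forall_exists_conj_mem
    fun g ↦ exists_conj_mem_centralizer_of_not_dvd_card_isConj hP (h g)

end ConjugacyClasses

theorem exists_dvd_card_isConj_of_center_eq_bot {G : Type*} [Group G] [Finite G]
    (hZ : center G = ⊥) {p : ℕ} (hp : p.Prime) (hdvd : p ∣ Nat.card G) :
    ∃ g : G, p ∣ Nat.card {h : G | IsConj g h} := by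
  have := Fact.mk hp
  by_contra! h
  obtain ⟨P⟩ : Nonempty (Sylow p G) := Sylow.nonempty
  have hcentral := le_center_of_forall_not_dvd_card_isConj P.isPGroup' h
  exact P.ne_bot_of_dvd_card hdvd (le_bot_iff.1 (hZ ▸ hcentral))

theorem primeDivisors_subset_of_classSizes_eq_general (G H : Type*) [Group G] [Finite G]
    [Group H] (hZ : Subgroup.center G = ⊥)
    (hN : classSizes G = classSizes H) :
    ∀ q : ℕ, q.Prime → q ∣ Nat.card G → q ∣ Nat.card H := by
  intro q hq hdvd
  obtain ⟨g, hg⟩ := exists_dvd_card_isConj_of_center_eq_bot hZ hq hdvd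
  obtain ⟨g', hg'⟩ : Nat.card {h : G | IsConj g h} ∈ classSizes H := hN ▸ ⟨g, rfl⟩
  rw [hg', card_isConj_eq_index_centralizer] at hg
  exact hg.trans (index_dvd_card _)

theorem primeDivisors_subset_of_classSizes_eq (G H : Type*) [Group G] [Finite G]
    [Group H] [Finite H] (hZ : Subgroup.center G = ⊥)
    (hN : classSizes G = classSizes H) :
    ∀ q : ℕ, q.Prime → q ∣ Nat.card G → q ∣ Nat.card H :=
  primeDivisors_subset_of_classSizes_eq_general G H hZ hN
end

section
/- Let K be a normal subgroup of a finite group G, let Ḡ = G/K, and let x ∈ G be an element whose order is coprime to |K|. Then the centralizer of the image x̄ of x in Ḡ satisfies C_Ḡ(x̄) = C_G(x)K/K, i.e. C_Ḡ(x̄) equals the image of the centralizer C_G(x) under the quotient map G → G/K. -/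
/-!
Given `g` whose image commutes with `x̄`, we look for `c ∈ gK` commuting with `x`. If `x` has
order `p ^ k`, then `⟨x⟩` acts by conjugation on the coset `gK`, whose size `|K|` is prime to `p`,
so the action has a fixed point. In general `x` is a product of powers `x ^ b`, `x ^ a` of coprime
orders `a`, `b`: first move `g` within its coset into `C(x ^ b)`, then treat `x ^ a` inside
`C(x ^ b)`, with `K ∩ C(x ^ b)` in place of `K`; hence everything is done inside a subgroup `H`.
-/

open Subgroup QuotientGroup
open scoped Pointwise

section

variable {G : Type*} [Group G]

theorem Commute.of_pow_right_of_coprime {x y : G} {a b : ℕ} (hab : a.Coprime b)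
    (ha : Commute y (x ^ a)) (hb : Commute y (x ^ b)) : Commute y x := by
  obtain ⟨s, t, hst⟩ := Nat.isCoprime_iff_coprime.2 hab
  have hx : x = (x ^ a) ^ s * (x ^ b) ^ t := by
    rw [← zpow_natCast, ← zpow_natCast, ← zpow_mul, ← zpow_mul, ← zpow_add, mul_comm, add_comm,
      mul_comm (b : ℤ), add_comm, hst, zpow_one]
  rw [hx]
  exact (ha.zpow_right s).mul_right (hb.zpow_right t)

theorem IsPGroup.exists_mem_centralizer_of_conj_mem {p : ℕ} [Fact p.Prime] {P : Subgroup G}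
    (hP : IsPGroup p P) {S : Set G} (hS : ∀ u ∈ P, ∀ y ∈ S, u * y * u⁻¹ ∈ S)
    (hpS : ¬ p ∣ Nat.card S) : ∃ c ∈ S, c ∈ centralizer (P : Set G) := by
  let _ : MulAction P S :=
    { smul u y := ⟨u * y * u⁻¹, hS u u.2 y y.2⟩
      one_smul y := Subtype.ext (by simp [HSMul.hSMul])
      mul_smul u v y := Subtype.ext (by simp [HSMul.hSMul, mul_assoc]) }
  obtain ⟨c, hc⟩ := hP.nonempty_fixed_point_of_prime_not_dvd_card S hpS
  refine ⟨c, c.2, mem_centralizer_iff.2 fun u hu => ?_⟩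
  exact mul_inv_eq_iff_eq_mul.1 (congrArg Subtype.val (hc ⟨u, hu⟩))

variable (K : Subgroup G) [K.Normal]

theorem exists_mem_centralizer_mk_eq_of_isPGroup {p : ℕ} [Fact p.Prime] {H P : Subgroup G}
    (hP : IsPGroup p P) (hPH : P ≤ H) (hpK : ¬ p ∣ Nat.card (K ⊓ H : Subgroup G)) {g : G}
    (hg : g ∈ H) (hcomm : ∀ u ∈ P, Commute (u : G ⧸ K) g) :
    ∃ c ∈ H ⊓ centralizer (P : Set G), (c : G ⧸ K) = g := by
  have hS : ∀ u ∈ P, ∀ y ∈ g • ((K ⊓ H : Subgroup G) : Set G),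
      u * y * u⁻¹ ∈ g • ((K ⊓ H : Subgroup G) : Set G) := by
    intro u hu y hy
    rw [Set.mem_smul_set_iff_inv_smul_mem, smul_eq_mul, SetLike.mem_coe, mem_inf] at hy ⊢
    have hyg : (y : G ⧸ K) = g := (QuotientGroup.eq.2 hy.1).symm
    have hyH : y ∈ H := by simpa using H.mul_mem hg hy.2
    refine ⟨?_, ?_⟩
    · rw [← QuotientGroup.eq_one_iff, mk_mul, mk_mul, mk_mul, mk_inv, mk_inv, hyg, (hcomm u hu).eq]
      group
    · exact H.mul_mem (H.inv_mem hg) (H.mul_mem (H.mul_mem (hPH hu) hyH) (H.inv_mem (hPH hu)))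
  obtain ⟨c, hcS, hc⟩ := hP.exists_mem_centralizer_of_conj_mem hS
    (by rwa [Set.natCard_smul_set, SetLike.coe_sort_coe])
  rw [Set.mem_smul_set_iff_inv_smul_mem, smul_eq_mul] at hcS
  refine ⟨c, ⟨?_, hc⟩, ?_⟩
  · simpa using H.mul_mem hg (mem_inf.1 hcS).2
  · exact (QuotientGroup.eq.2 (mem_inf.1 hcS).1).symm

theorem exists_mem_centralizer_mk_eq_of_coprime [Finite G] {H : Subgroup G} {x g : G}
    (hx : x ∈ H) (hg : g ∈ H) (hcop : (orderOf x).Coprime (Nat.card (K ⊓ H : Subgroup G)))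
    (hcomm : Commute (x : G ⧸ K) g) : ∃ c ∈ H ⊓ centralizer {x}, (c : G ⧸ K) = g := by
  obtain ⟨n, hn⟩ : ∃ n, orderOf x = n := ⟨_, rfl⟩
  rw [hn] at hcop
  induction n using Nat.recOnPosPrimePosCoprime generalizing H x g with
  | prime_pow p k hp hk =>
    have : Fact p.Prime := ⟨hp⟩
    obtain ⟨c, ⟨hcH, hc⟩, hcg⟩ := exists_mem_centralizer_mk_eq_of_isPGroup K
      (IsPGroup.of_card (by rw [Nat.card_zpowers, hn])) ((zpowers_le).2 hx)
      ((hp.coprime_iff_not_dvd).1 ((Nat.coprime_pow_left_iff hk _ _).1 hcop)) hg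
      (fun u hu => by obtain ⟨i, rfl⟩ := mem_zpowers_iff.1 hu; simpa using hcomm.zpow_left i)
    exact ⟨c, ⟨hcH, centralizer_le (Set.singleton_subset_iff.2 (mem_zpowers x)) hc⟩, hcg⟩
  | zero => exact absurd hn (orderOf_pos x).ne'
  | one => exact ⟨g, ⟨hg, by simp [orderOf_eq_one_iff.1 hn, mem_centralizer_singleton_iff]⟩, rfl⟩
  | coprime a b ha hb hab iha ihb =>
    have hxb : orderOf (x ^ b) = a := by
      rw [orderOf_pow_of_dvd (by omega) (hn ▸ dvd_mul_left b a), hn,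
        Nat.mul_div_cancel _ (by omega)]
    have hxa : orderOf (x ^ a) = b := by
      rw [orderOf_pow_of_dvd (by omega) (hn ▸ dvd_mul_right a b), hn,
        Nat.mul_div_cancel_left _ (by omega)]
    obtain ⟨c, hcH, hcg⟩ := iha (pow_mem hx b) hg (by simpa using hcomm.pow_left b)
      hcop.coprime_mul_right hxb
    have hxa_mem : x ^ a ∈ H ⊓ centralizer {x ^ b} :=
      ⟨pow_mem hx a, mem_centralizer_singleton_iff.2 ((Commute.refl x).pow_pow a b).eq⟩
    have hcopK : b.Coprime (Nat.card (K ⊓ (H ⊓ centralizer {x ^ b}) : Subgroup G)) :=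
      hcop.coprime_mul_left.coprime_dvd_right (card_dvd_of_le (inf_le_inf_left K inf_le_left))
    obtain ⟨d, ⟨⟨hdH, hdxb⟩, hdxa⟩, hdc⟩ :=
      ihb hxa_mem hcH (by simpa [hcg] using hcomm.pow_left a) hcopK hxa
    refine ⟨d, ⟨hdH, mem_centralizer_singleton_iff.2 ?_⟩, hdc.trans hcg⟩
    exact Commute.of_pow_right_of_coprime hab (mem_centralizer_singleton_iff.1 hdxa)
      (mem_centralizer_singleton_iff.1 hdxb)

end

theorem centralizer_quotient_eq_map_of_coprime (G : Type*) [Group G] [Finite G]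
    (K : Subgroup G) [K.Normal] (x : G)
    (h : (orderOf x).Coprime (Nat.card K)) :
    Subgroup.centralizer {(QuotientGroup.mk x : G ⧸ K)} =
      Subgroup.map (QuotientGroup.mk' K) (Subgroup.centralizer {x}) := by
  refine le_antisymm (fun ξ hξ => ?_)
    ((map_centralizer_le_centralizer_image _ _).trans_eq (by simp))
  obtain ⟨g, rfl⟩ := mk_surjective ξ
  obtain ⟨c, ⟨-, hc⟩, hcg⟩ := exists_mem_centralizer_mk_eq_of_coprime K (mem_top x) (mem_top g)
    (by rwa [inf_top_eq]) (mem_centralizer_singleton_iff.1 hξ).symm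
  exact ⟨c, hc, hcg⟩
end

section
/- Let G be a finite abelian group, let q be a prime not dividing |G|, and let g be an automorphism of G of order q. Then q divides |[G,g]| − 1, where [G,g] is the subgroup of G generated by the elements x⁻¹·g(x) for x ∈ G. -/
/-!
In an abelian group `x ↦ x⁻¹ * g x` is a homomorphism, so `[G,g]` is its image, which is `g`-stable.
If `y = x⁻¹ * g x` is fixed by `g`, then `g ^ n x = x * y ^ n`; hence `g ^ q = 1` forces `y ^ q = 1`,
so `y = 1` because `q` is coprime to `|G|`. Thus `g` permutes `[G,g]` with `1` as its only fixed
point, and since `g ^ q = 1` every other orbit has size `q`.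
-/

theorem Equiv.Perm.prime_dvd_card_sub_one_of_unique_fixedPoint {α : Type*} [Finite α]
    {p n : ℕ} [Fact p.Prime] {σ : Equiv.Perm α} (hσ : σ ^ p ^ n = 1) {a : α}
    (ha : ∀ x, σ x = x ↔ x = a) : p ∣ Nat.card α - 1 := by
  classical
  have := Fintype.ofFinite α
  have : Nonempty α := ⟨a⟩
  have hfixed : σ.supportᶜ = {a} := by
    ext x
    simp [mem_support, ha]
  have hmod := card_compl_support_modEq hσ
  rw [hfixed, Finset.card_singleton, ← Nat.card_eq_fintype_card] at hmod
  exact (Nat.modEq_iff_dvd' Nat.card_pos).mp hmod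

namespace MulAut

variable {G : Type*} [CommGroup G] (g : MulAut G)

def commutatorHom : G →* G where
  toFun x := x⁻¹ * g x
  map_one' := by simp
  map_mul' x y := by simp only [mul_inv, map_mul]; ac_rfl

@[simp]
theorem commutatorHom_apply (x : G) : g.commutatorHom x = x⁻¹ * g x := rfl

theorem mul_commutatorHom_apply (x : G) : x * g.commutatorHom x = g x := by simp

theorem closure_setOf_eq_inv_mul_apply :
    Subgroup.closure {y : G | ∃ x : G, y = x⁻¹ * g x} = g.commutatorHom.range := by
  rw [← Subgroup.closure_eq g.commutatorHom.range, MonoidHom.coe_range]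
  congr 1
  ext y
  simp [eq_comm]

theorem apply_mem_range_commutatorHom_iff {y : G} :
    g y ∈ g.commutatorHom.range ↔ y ∈ g.commutatorHom.range := by
  constructor
  · rintro ⟨x, hx⟩
    refine ⟨g⁻¹ x, g.injective ?_⟩
    simpa using hx
  · rintro ⟨x, rfl⟩
    exact ⟨g x, by simp⟩

theorem pow_apply_eq_mul_commutatorHom_pow {x : G}
    (hfix : g (g.commutatorHom x) = g.commutatorHom x) (n : ℕ) :
    (g ^ n) x = x * g.commutatorHom x ^ n := by
  induction n with
  | zero => simp
  | succ n ih =>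
    rw [pow_succ', mul_apply, ih, map_mul, map_pow, hfix, pow_succ', ← mul_assoc,
      mul_commutatorHom_apply]

theorem eq_one_of_mem_range_commutatorHom_of_apply_eq [Finite G] {n : ℕ}
    (hn : (Nat.card G).Coprime n) (hgn : g ^ n = 1) {y : G} (hy : y ∈ g.commutatorHom.range)
    (hfix : g y = y) : y = 1 := by
  obtain ⟨x, rfl⟩ := hy
  have hpow : g.commutatorHom x ^ n = 1 := by
    simpa [hgn] using g.pow_apply_eq_mul_commutatorHom_pow hfix n
  exact (Nat.Coprime.pow_left_bijective hn).injective (by simpa using hpow)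

def restrictRangeCommutatorHom : Equiv.Perm g.commutatorHom.range :=
  (toPerm G g).subtypePerm (p := (· ∈ g.commutatorHom.range))
    fun _ => g.apply_mem_range_commutatorHom_iff

theorem coe_restrictRangeCommutatorHom_pow_apply (n : ℕ) (y : g.commutatorHom.range) :
    ((g.restrictRangeCommutatorHom ^ n) y : G) = (g ^ n) y := by
  induction n with
  | zero => rfl
  | succ n ih => rw [pow_succ', Equiv.Perm.mul_apply, pow_succ', mul_apply, ← ih]; rfl

theorem prime_dvd_card_range_commutatorHom_sub_one [Finite G] {q : ℕ} [Fact q.Prime]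
    (hqG : ¬ q ∣ Nat.card G) (hgq : g ^ q = 1) :
    q ∣ Nat.card g.commutatorHom.range - 1 := by
  refine Equiv.Perm.prime_dvd_card_sub_one_of_unique_fixedPoint
    (σ := g.restrictRangeCommutatorHom) (n := 1) (a := 1) ?_ ?_
  · ext y
    rw [pow_one, coe_restrictRangeCommutatorHom_pow_apply, hgq]
    rfl
  · rintro ⟨y, hy⟩
    rw [Subtype.ext_iff, Subtype.ext_iff]
    change g y = y ↔ y = 1
    have hcop : (Nat.card G).Coprime q := ((Fact.out : q.Prime).coprime_iff_not_dvd.2 hqG).symm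
    exact ⟨g.eq_one_of_mem_range_commutatorHom_of_apply_eq hcop hgq hy, fun h => h ▸ map_one g⟩

end MulAut

theorem prime_dvd_card_commutator_sub_one (G : Type*) [CommGroup G] [Finite G]
    (q : ℕ) (hq : q.Prime) (hqG : ¬ q ∣ Nat.card G)
    (g : MulAut G) (hg : orderOf g = q) :
    q ∣ Nat.card (Subgroup.closure {y : G | ∃ x : G, y = x⁻¹ * g x}) - 1 := by
  have : Fact q.Prime := ⟨hq⟩
  rw [g.closure_setOf_eq_inv_mul_apply]
  exact g.prime_dvd_card_range_commutatorHom_sub_one hqG (hg ▸ pow_orderOf_eq_one g)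
end
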